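/- Let Ω ⊂ ℝ^d be a bounded convex open set. Then Ω is a bounded Lipschitz domain: there exist finitely many points x₁, …, x_N ∈ ∂Ω and radii r₁, …, r_N > 0 such that the balls B(x_i, r_i) cover ∂Ω and for each i, B(x_i, r_i) ∩ Ω = B(x_i, r_i) ∩ Ω_i, where Ω_i is a rotation (and translation) of a special Lipschitz domain. -/

import Mathlib

/-!
Let `p ∈ ∂Ω` and let `B(c, ρ) ⊆ Ω`. After a rigid motion, `p = 0` and `c` lies on the positive
last axis. By convexity, each point of `closure Ω` near `0` is the vertex of an upward cone of
fixed aperture contained in `Ω`, and `Ω` avoids the downward cone at `0`. Hence near `0` the set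
`Ω` is the strict epigraph of `y ↦ inf {t | (y, t) ∈ Ω}`, and the upward cones make this function
Lipschitz. Compactness of `∂Ω` leaves finitely many such balls.
-/

open Metric Set

/-- `S` is a rigid motion (rotation and translation) of a special Lipschitz domain
`{(x', x_d) : x_d > h(x')}` with `h : ℝ^{d-1} → ℝ` Lipschitz. -/
def IsRotatedSpecialLipschitzDomain {m : ℕ} (S : Set (EuclideanSpace ℝ (Fin (m + 1)))) :
    Prop :=
  ∃ (f : EuclideanSpace ℝ (Fin (m + 1)) ≃ₗᵢ[ℝ] EuclideanSpace ℝ (Fin (m + 1)))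
    (v : EuclideanSpace ℝ (Fin (m + 1))) (L : NNReal)
    (h : EuclideanSpace ℝ (Fin m) → ℝ), LipschitzWith L h ∧
      S = (fun z => f z + v) ''
        {x : EuclideanSpace ℝ (Fin (m + 1)) |
          h (WithLp.toLp 2 (fun i : Fin m => x i.castSucc)) < x (Fin.last m)}

namespace EuclideanSpace

variable {m : ℕ}

def snoc (y : EuclideanSpace ℝ (Fin m)) (t : ℝ) : EuclideanSpace ℝ (Fin (m + 1)) :=
  WithLp.toLp 2 (Fin.snoc (α := fun _ => ℝ) y.ofLp t)

def init (x : EuclideanSpace ℝ (Fin (m + 1))) : EuclideanSpace ℝ (Fin m) :=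
  WithLp.toLp 2 (Fin.init x.ofLp)

@[simp] lemma snoc_apply_castSucc (y : EuclideanSpace ℝ (Fin m)) (t : ℝ) (i : Fin m) :
    snoc y t i.castSucc = y i := by simp [snoc]

@[simp] lemma snoc_apply_last (y : EuclideanSpace ℝ (Fin m)) (t : ℝ) :
    snoc y t (Fin.last m) = t := by simp [snoc]

@[simp] lemma init_apply (x : EuclideanSpace ℝ (Fin (m + 1))) (i : Fin m) :
    init x i = x i.castSucc := rfl

@[simp] lemma snoc_init (x : EuclideanSpace ℝ (Fin (m + 1))) :
    snoc (init x) (x (Fin.last m)) = x := by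
  ext i; induction i using Fin.lastCases <;> simp

lemma snoc_add_snoc (y₁ y₂ : EuclideanSpace ℝ (Fin m)) (t₁ t₂ : ℝ) :
    snoc y₁ t₁ + snoc y₂ t₂ = snoc (y₁ + y₂) (t₁ + t₂) := by
  ext i; induction i using Fin.lastCases <;> simp

lemma snoc_add_smul_single (y : EuclideanSpace ℝ (Fin m)) (t s : ℝ) :
    snoc y t + s • single (Fin.last m) 1 = snoc y (t + s) := by
  ext i; induction i using Fin.lastCases <;> simp [(Fin.castSucc_lt_last _).ne]

lemma snoc_sub_smul_single (y : EuclideanSpace ℝ (Fin m)) (t : ℝ) :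
    snoc y t - t • single (Fin.last m) 1 = snoc y 0 := by
  rw [sub_eq_iff_eq_add, snoc_add_smul_single, zero_add]

@[simp] lemma snoc_zero_zero : snoc (0 : EuclideanSpace ℝ (Fin m)) 0 = 0 := by
  ext i; induction i using Fin.lastCases <;> simp

@[fun_prop] lemma continuous_snoc (y : EuclideanSpace ℝ (Fin m)) : Continuous (snoc y) := by
  have : snoc y = fun t => snoc y 0 + t • single (Fin.last m) 1 := by
    funext t; rw [snoc_add_smul_single, zero_add]
  rw [this]; fun_prop

lemma norm_snoc_sq (y : EuclideanSpace ℝ (Fin m)) (t : ℝ) : ‖snoc y t‖ ^ 2 = ‖y‖ ^ 2 + t ^ 2 := by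
  simp [EuclideanSpace.norm_sq_eq, Fin.sum_univ_castSucc]

@[simp] lemma norm_snoc_zero (y : EuclideanSpace ℝ (Fin m)) : ‖snoc y 0‖ = ‖y‖ := by
  rw [← sq_eq_sq₀ (norm_nonneg _) (norm_nonneg _), norm_snoc_sq]; ring

lemma norm_snoc_le (y : EuclideanSpace ℝ (Fin m)) (t : ℝ) : ‖snoc y t‖ ≤ ‖y‖ + |t| :=
  calc ‖snoc y t‖ = ‖snoc y 0 + t • single (Fin.last m) 1‖ := by
        rw [snoc_add_smul_single, zero_add]
    _ ≤ ‖y‖ + |t| := (norm_add_le _ _).trans_eq (by simp [norm_smul])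

lemma norm_init_le (x : EuclideanSpace ℝ (Fin (m + 1))) : ‖init x‖ ≤ ‖x‖ := by
  refine le_of_sq_le_sq ?_ (norm_nonneg x)
  conv_rhs => rw [← snoc_init x, norm_snoc_sq]
  exact le_add_of_nonneg_right (sq_nonneg _)

lemma abs_apply_last_le (x : EuclideanSpace ℝ (Fin (m + 1))) : |x (Fin.last m)| ≤ ‖x‖ :=
  PiLp.norm_apply_le x (Fin.last m)

end EuclideanSpace

namespace Convex

variable {E : Type*} [NormedAddCommGroup E] [NormedSpace ℝ E] {Ω : Set E}

/-- The hypothesis on `v` says that `p + v` lies in the image of `ball c ρ` under the homothety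
with centre `p` and ratio `a`. -/
theorem add_mem_interior_of_norm_sub_lt (hΩ : Convex ℝ Ω) {p c v : E} {ρ a : ℝ}
    (hp : p ∈ closure Ω) (hc : ball c ρ ⊆ interior Ω) (ha₀ : 0 < a) (ha₁ : a ≤ 1)
    (hv : ‖v - a • (c - p)‖ < a * ρ) : p + v ∈ interior Ω := by
  have hb : p + a⁻¹ • v ∈ interior Ω := by
    refine hc ?_
    have : p + a⁻¹ • v - c = a⁻¹ • (v - a • (c - p)) := by
      rw [smul_sub, smul_smul, inv_mul_cancel₀ ha₀.ne', one_smul]; abel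
    rw [mem_ball, dist_eq_norm, this, norm_smul, Real.norm_of_nonneg (inv_nonneg.2 ha₀.le),
      inv_mul_lt_iff₀ ha₀]
    exact hv
  convert hΩ.combo_interior_closure_mem_interior hb hp ha₀ (sub_nonneg.2 ha₁)
    (add_sub_cancel a 1) using 1
  rw [smul_add, smul_smul, mul_inv_cancel₀ ha₀.ne', one_smul]
  module

theorem add_smul_add_mem_interior (hΩ : Convex ℝ Ω) {e p u : E} {d ρ s : ℝ}
    (hc : ball (d • e) ρ ⊆ interior Ω) (hp : p ∈ closure Ω) (hpρ : ‖p‖ < ρ / 2)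
    (hs : 0 < s) (hsd : s ≤ d) (hu : ‖u‖ ≤ ρ / (2 * d) * s) :
    p + (s • e + u) ∈ interior Ω := by
  have hd : 0 < d := hs.trans_le hsd
  refine hΩ.add_mem_interior_of_norm_sub_lt hp hc (div_pos hs hd) ((div_le_one hd).2 hsd) ?_
  have : s • e + u - (s / d) • (d • e - p) = u + (s / d) • p := by
    rw [smul_sub, smul_smul, div_mul_cancel₀ _ hd.ne']; abel
  calc ‖s • e + u - (s / d) • (d • e - p)‖ ≤ ‖u‖ + s / d * ‖p‖ := by
        rw [this]
        exact (norm_add_le _ _).trans_eq (by rw [norm_smul, Real.norm_of_nonneg (by positivity)])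
    _ < ρ / (2 * d) * s + s / d * (ρ / 2) :=
        add_lt_add_of_le_of_lt hu (mul_lt_mul_of_pos_left hpρ (by positivity))
    _ = s / d * ρ := by field_simp; ring

theorem neg_mul_norm_sub_smul_le (hΩ : Convex ℝ Ω) {e q : E} {d ρ : ℝ} (hd : 0 < d)
    (hρ : 0 < ρ) (hc : ball (d • e) ρ ⊆ interior Ω) (h0 : (0 : E) ∉ interior Ω)
    (hq : q ∈ closure Ω) (t : ℝ) : -(d / ρ * ‖q - t • e‖) ≤ t := by
  -- otherwise `0` lies strictly between `q` and a point of `ball (d • e) ρ`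
  by_contra! ht
  have ht₀ : t < 0 := ht.trans_le (neg_nonpos.2 (by positivity))
  have hdt : 0 < d - t := by linarith
  refine h0 ?_
  have key := hΩ.add_mem_interior_of_norm_sub_lt (v := -q) (a := -t / (d - t)) hq hc
    (div_pos (neg_pos.2 ht₀) hdt) ((div_le_one hdt).2 (by linarith)) ?_
  · rwa [add_neg_cancel] at key
  have : -q - (-t / (d - t)) • (d • e - q) = -(d / (d - t)) • (q - t • e) := by
    match_scalars
    · field_simp; ring
    · field_simp
  rw [this, norm_smul, Real.norm_eq_abs, abs_neg, abs_of_pos (div_pos hd hdt), div_mul_eq_mul_div,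
    div_mul_eq_mul_div, div_lt_div_iff_of_pos_right hdt]
  rw [lt_neg, div_mul_eq_mul_div, div_lt_iff₀ hρ] at ht
  linarith

end Convex

namespace EuclideanSpace

variable {m : ℕ} {Ω : Set (EuclideanSpace ℝ (Fin (m + 1)))}

def slice (Ω : Set (EuclideanSpace ℝ (Fin (m + 1)))) (y : EuclideanSpace ℝ (Fin m)) : Set ℝ :=
  {t | snoc y t ∈ Ω}

@[simp] lemma mem_slice {y : EuclideanSpace ℝ (Fin m)} {t : ℝ} : t ∈ slice Ω y ↔ snoc y t ∈ Ω :=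
  Iff.rfl

lemma neg_mul_norm_le_of_mem_slice (hΩc : Convex ℝ Ω) (hΩo : IsOpen Ω) {d ρ : ℝ} (hd : 0 < d)
    (hρ : 0 < ρ) (hc : ball (d • single (Fin.last m) 1) ρ ⊆ Ω) (h0 : 0 ∉ Ω)
    {y : EuclideanSpace ℝ (Fin m)} {t : ℝ} (ht : t ∈ slice Ω y) : -(d / ρ * ‖y‖) ≤ t := by
  rw [← hΩo.interior_eq] at hc h0
  simpa [snoc_sub_smul_single] using
    hΩc.neg_mul_norm_sub_smul_le hd hρ hc h0 (subset_closure ht) t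

lemma bddBelow_slice (hΩc : Convex ℝ Ω) (hΩo : IsOpen Ω) {d ρ : ℝ} (hd : 0 < d)
    (hρ : 0 < ρ) (hc : ball (d • single (Fin.last m) 1) ρ ⊆ Ω) (h0 : 0 ∉ Ω)
    (y : EuclideanSpace ℝ (Fin m)) : BddBelow (slice Ω y) :=
  ⟨_, fun _ ht => neg_mul_norm_le_of_mem_slice hΩc hΩo hd hρ hc h0 ht⟩

lemma add_mem_slice (hΩc : Convex ℝ Ω) (hΩo : IsOpen Ω) {d ρ : ℝ}
    (hc : ball (d • single (Fin.last m) 1) ρ ⊆ Ω) {y₁ y₂ : EuclideanSpace ℝ (Fin m)} {t s : ℝ}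
    (hp : snoc y₁ t ∈ closure Ω) (hpρ : ‖snoc y₁ t‖ < ρ / 2) (hs : 0 < s) (hsd : s ≤ d)
    (hy : ‖y₂ - y₁‖ ≤ ρ / (2 * d) * s) : t + s ∈ slice Ω y₂ := by
  rw [← hΩo.interior_eq] at hc
  have := hΩc.add_smul_add_mem_interior (u := snoc (y₂ - y₁) 0) hc hp hpρ hs hsd
    (by rwa [norm_snoc_zero])
  rwa [hΩo.interior_eq, add_comm (s • _), ← add_assoc, snoc_add_snoc, add_sub_cancel,
    snoc_add_smul_single, add_zero] at this

lemma snoc_sInf_slice_mem_closure {y : EuclideanSpace ℝ (Fin m)} (hne : (slice Ω y).Nonempty)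
    (hbdd : BddBelow (slice Ω y)) : snoc y (sInf (slice Ω y)) ∈ closure Ω :=
  map_mem_closure (continuous_snoc y) (csInf_mem_closure hne hbdd) fun _ ht => ht

lemma sInf_slice_le (hΩc : Convex ℝ Ω) (hΩo : IsOpen Ω) {d ρ : ℝ} (hd : 0 < d) (hρ : 0 < ρ)
    (hc : ball (d • single (Fin.last m) 1) ρ ⊆ Ω) {y₁ y₂ : EuclideanSpace ℝ (Fin m)} {t : ℝ}
    (hp : snoc y₁ t ∈ closure Ω) (hpρ : ‖snoc y₁ t‖ < ρ / 2)
    (hy : 2 * d / ρ * ‖y₂ - y₁‖ < d) (hbdd : BddBelow (slice Ω y₂)) :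
    sInf (slice Ω y₂) ≤ t + 2 * d / ρ * ‖y₂ - y₁‖ := by
  refine ge_of_tendsto (tendsto_nhdsWithin_of_tendsto_nhds (s := Ioi 0)
    (Continuous.tendsto' (by fun_prop : Continuous fun ε : ℝ => t + 2 * d / ρ * ‖y₂ - y₁‖ + ε)
      0 _ (add_zero _))) ?_
  filter_upwards [Ioo_mem_nhdsGT (sub_pos.2 hy)] with ε ⟨hε₀, hε⟩
  rw [add_assoc]
  refine csInf_le hbdd (add_mem_slice hΩc hΩo hc hp hpρ (by positivity) (by linarith) ?_)
  rw [mul_add, ← mul_assoc, div_mul_div_comm, mul_comm ρ, mul_assoc 2, div_self (by positivity),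
    one_mul]
  exact le_add_of_nonneg_right (by positivity)

lemma sInf_slice_lt (hΩo : IsOpen Ω) {y : EuclideanSpace ℝ (Fin m)} {t : ℝ}
    (hbdd : BddBelow (slice Ω y)) (ht : t ∈ slice Ω y) : sInf (slice Ω y) < t := by
  obtain ⟨l, hl, hlt⟩ := exists_Ioc_subset_of_mem_nhds
    ((hΩo.preimage (continuous_snoc y)).mem_nhds ht) ⟨t - 1, by linarith⟩
  calc sInf (slice Ω y) ≤ (l + t) / 2 := csInf_le hbdd (hlt ⟨by linarith, by linarith⟩)
    _ < t := by linarith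

lemma mem_slice_of_norm_le (hΩc : Convex ℝ Ω) (hΩo : IsOpen Ω) {d ρ : ℝ} (hd : 0 < d)
    (hρ : 0 < ρ) (hc : ball (d • single (Fin.last m) 1) ρ ⊆ Ω) (h0 : 0 ∈ closure Ω)
    {y : EuclideanSpace ℝ (Fin m)} (hy : ‖y‖ ≤ ρ / 2) : d ∈ slice Ω y := by
  simpa using add_mem_slice hΩc hΩo hc (y₁ := 0) (y₂ := y) (t := 0) (by simpa using h0)
    (by simpa using hρ) hd le_rfl
    (by rwa [sub_zero, div_mul_eq_mul_div, mul_div_mul_right _ _ hd.ne'])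

lemma abs_sInf_slice_le (hΩc : Convex ℝ Ω) (hΩo : IsOpen Ω) {d ρ : ℝ} (hρ : 0 < ρ)
    (hρd : ρ ≤ d) (hc : ball (d • single (Fin.last m) 1) ρ ⊆ Ω) (h0 : 0 ∈ frontier Ω)
    {y : EuclideanSpace ℝ (Fin m)} (hy : ‖y‖ < ρ / 2) :
    |sInf (slice Ω y)| ≤ 2 * d / ρ * ‖y‖ := by
  have hd : 0 < d := hρ.trans_le hρd
  rw [hΩo.frontier_eq] at h0
  have hbdd := bddBelow_slice hΩc hΩo hd hρ hc h0.2 y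
  refine abs_le.2 ⟨?_, ?_⟩
  · refine le_csInf ⟨d, mem_slice_of_norm_le hΩc hΩo hd hρ hc h0.1 hy.le⟩ fun t ht => ?_
    refine le_trans ?_ (neg_mul_norm_le_of_mem_slice hΩc hΩo hd hρ hc h0.2 ht)
    rw [neg_le_neg_iff]
    gcongr
    linarith
  · have := sInf_slice_le hΩc hΩo hd hρ hc (y₁ := 0) (t := 0) (by simpa using h0.1)
      (by simpa using hρ) ?_ hbdd
    · simpa using this
    calc 2 * d / ρ * ‖y - 0‖ < 2 * d / ρ * (ρ / 2) := by rw [sub_zero]; gcongr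
      _ = d := by field_simp

lemma norm_snoc_sInf_slice_le (hΩc : Convex ℝ Ω) (hΩo : IsOpen Ω) {d ρ δ : ℝ} (hρ : 0 < ρ)
    (hρd : ρ ≤ d) (hc : ball (d • single (Fin.last m) 1) ρ ⊆ Ω) (h0 : 0 ∈ frontier Ω)
    (hδ : (2 * d / ρ + 1) * δ ≤ ρ / 4) {y : EuclideanSpace ℝ (Fin m)} (hy : ‖y‖ ≤ δ) :
    ‖snoc y (sInf (slice Ω y))‖ ≤ ρ / 4 := by
  have hd : 0 < d := hρ.trans_le hρd
  have hK : 0 ≤ 2 * d / ρ := by positivity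
  have hδρ : δ < ρ / 2 := by nlinarith [norm_nonneg y]
  calc ‖snoc y (sInf (slice Ω y))‖ ≤ ‖y‖ + 2 * d / ρ * ‖y‖ :=
        (norm_snoc_le _ _).trans (add_le_add_right
          (abs_sInf_slice_le hΩc hΩo hρ hρd hc h0 (hy.trans_lt hδρ)) _)
    _ ≤ ρ / 4 := by nlinarith

lemma lipschitzOnWith_sInf_slice (hΩc : Convex ℝ Ω) (hΩo : IsOpen Ω) {d ρ δ : ℝ} (hρ : 0 < ρ)
    (hρd : ρ ≤ d) (hc : ball (d • single (Fin.last m) 1) ρ ⊆ Ω) (h0 : 0 ∈ frontier Ω)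
    (hδ : (2 * d / ρ + 1) * δ ≤ ρ / 4) :
    LipschitzOnWith (2 * d / ρ).toNNReal (fun y => sInf (slice Ω y)) (closedBall 0 δ) := by
  have hd : 0 < d := hρ.trans_le hρd
  have hK : 0 ≤ 2 * d / ρ := by positivity
  have h0' := h0
  rw [hΩo.frontier_eq] at h0'
  refine LipschitzOnWith.of_le_add_mul' _ fun y₂ hy₂ y₁ hy₁ => ?_
  rw [mem_closedBall_zero_iff] at hy₁ hy₂
  have hδρ : δ ≤ ρ / 4 := by nlinarith [norm_nonneg y₁]
  have hbdd := bddBelow_slice hΩc hΩo hd hρ hc h0'.2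
  have hne : (slice Ω y₁).Nonempty := ⟨d, mem_slice_of_norm_le hΩc hΩo hd hρ hc h0'.1 (by linarith)⟩
  rw [dist_eq_norm]
  refine sInf_slice_le hΩc hΩo hd hρ hc (snoc_sInf_slice_mem_closure hne (hbdd y₁))
    ((norm_snoc_sInf_slice_le hΩc hΩo hρ hρd hc h0 hδ hy₁).trans_lt (by linarith)) ?_ (hbdd y₂)
  calc 2 * d / ρ * ‖y₂ - y₁‖ ≤ 2 * d / ρ * (2 * δ) := by
        gcongr; exact (norm_sub_le _ _).trans (by linarith)
    _ < d := by nlinarith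

lemma mem_iff_sInf_slice_lt (hΩc : Convex ℝ Ω) (hΩo : IsOpen Ω) {d ρ δ : ℝ} (hρ : 0 < ρ)
    (hρd : ρ ≤ d) (hc : ball (d • single (Fin.last m) 1) ρ ⊆ Ω) (h0 : 0 ∈ frontier Ω)
    (hδ : (2 * d / ρ + 1) * δ ≤ ρ / 4) {x : EuclideanSpace ℝ (Fin (m + 1))} (hx : ‖x‖ < δ) :
    x ∈ Ω ↔ sInf (slice Ω (init x)) < x (Fin.last m) := by
  have hd : 0 < d := hρ.trans_le hρd
  have hK : 0 ≤ 2 * d / ρ := by positivity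
  have h0' := h0
  rw [hΩo.frontier_eq] at h0'
  have hbdd := bddBelow_slice hΩc hΩo hd hρ hc h0'.2 (init x)
  have hy : ‖init x‖ ≤ δ := (norm_init_le x).trans hx.le
  have hδρ : δ ≤ ρ / 4 := by nlinarith [norm_nonneg x]
  have hne : (slice Ω (init x)).Nonempty :=
    ⟨d, mem_slice_of_norm_le hΩc hΩo hd hρ hc h0'.1 (by linarith)⟩
  constructor
  · intro hxΩ
    exact sInf_slice_lt hΩo hbdd (by rwa [mem_slice, snoc_init])
  · intro hlt
    have hg := abs_sInf_slice_le hΩc hΩo hρ hρd hc h0 (by linarith : ‖init x‖ < ρ / 2)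
    have hxd := (le_abs_self _).trans ((abs_apply_last_le x).trans hx.le)
    have := add_mem_slice hΩc hΩo hc (snoc_sInf_slice_mem_closure hne hbdd)
      ((norm_snoc_sInf_slice_le hΩc hΩo hρ hρd hc h0 hδ hy).trans_lt (by linarith))
      (sub_pos.2 hlt) (by nlinarith [abs_le.1 hg, mul_le_mul_of_nonneg_left hy hK])
      (by rw [sub_self, norm_zero]; exact mul_nonneg (by positivity) (sub_pos.2 hlt).le)
    rwa [add_sub_cancel, mem_slice, snoc_init] at this

theorem exists_ball_inter_eq_ball_inter_epigraph (hΩc : Convex ℝ Ω) (hΩo : IsOpen Ω) {d ρ : ℝ}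
    (hρ : 0 < ρ) (hρd : ρ ≤ d) (hc : ball (d • single (Fin.last m) 1) ρ ⊆ Ω)
    (h0 : 0 ∈ frontier Ω) :
    ∃ r > 0, ∃ (L : NNReal) (h : EuclideanSpace ℝ (Fin m) → ℝ), LipschitzWith L h ∧
      ball 0 r ∩ Ω = ball 0 r ∩ {x | h (init x) < x (Fin.last m)} := by
  have hd : 0 < d := hρ.trans_le hρd
  set δ := ρ / (4 * (2 * d / ρ + 1))
  have hδ : (2 * d / ρ + 1) * δ ≤ ρ / 4 := by
    rw [mul_div_assoc', mul_comm 4, ← div_div, mul_div_cancel_left₀ _ (by positivity)]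
  obtain ⟨h, hLip, hgh⟩ := (lipschitzOnWith_sInf_slice hΩc hΩo hρ hρd hc h0 hδ).extend_real
  refine ⟨δ, by positivity, _, h, hLip, ?_⟩
  ext x
  simp only [mem_inter_iff, mem_ball_zero_iff, mem_ofPred_eq]
  refine and_congr_right fun hx => ?_
  rw [mem_iff_sInf_slice_lt hΩc hΩo hρ hρd hc h0 hδ hx,
    ← hgh (mem_closedBall_zero_iff.2 ((norm_init_le x).trans hx.le))]

end EuclideanSpace

theorem exists_linearIsometryEquiv_apply_norm_smul_eq {F : Type*} [NormedAddCommGroup F]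
    [InnerProductSpace ℝ F] {e : F} (he : ‖e‖ = 1) (v : F) :
    ∃ f : F ≃ₗᵢ[ℝ] F, f (‖v‖ • e) = v :=
  ⟨_, Submodule.reflection_sub (by rw [norm_smul, he, mul_one, norm_norm])⟩

theorem IsCompact.exists_fin_cover_balls {X : Type*} [PseudoMetricSpace X] {K : Set X}
    (hK : IsCompact K) {P : X → ℝ → Prop} (hP : ∀ x ∈ K, ∃ r > 0, P x r) :
    ∃ (N : ℕ) (x : Fin N → X) (r : Fin N → ℝ), (∀ i, x i ∈ K) ∧ (∀ i, 0 < r i) ∧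
      K ⊆ ⋃ i, ball (x i) (r i) ∧ ∀ i, P (x i) (r i) := by
  choose! r hr hPr using hP
  obtain ⟨t, htK, hcov⟩ := hK.elim_nhds_subcover (fun x => ball x (r x))
    fun x hx => ball_mem_nhds x (hr x hx)
  refine ⟨t.card, fun i => t.equivFin.symm i, fun i => r (t.equivFin.symm i),
    fun i => htK _ (t.equivFin.symm i).2, fun i => hr _ (htK _ (t.equivFin.symm i).2), ?_,
    fun i => hPr _ (htK _ (t.equivFin.symm i).2)⟩
  intro q hq
  obtain ⟨x, hxt, hqx⟩ := mem_iUnion₂.1 (hcov hq)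
  exact mem_iUnion.2 ⟨t.equivFin ⟨x, hxt⟩, by simpa using hqx⟩

open EuclideanSpace in
theorem exists_ball_inter_eq_ball_inter_rotatedSpecialLipschitzDomain {m : ℕ}
    {Ω : Set (EuclideanSpace ℝ (Fin (m + 1)))} (hΩc : Convex ℝ Ω) (hΩo : IsOpen Ω)
    {p : EuclideanSpace ℝ (Fin (m + 1))} (hp : p ∈ frontier Ω) :
    ∃ r > 0, ∃ Ωi : Set (EuclideanSpace ℝ (Fin (m + 1))),
      IsRotatedSpecialLipschitzDomain Ωi ∧ ball p r ∩ Ω = ball p r ∩ Ωi := by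
  obtain ⟨c, hc⟩ : Ω.Nonempty := closure_nonempty_iff.1 ⟨p, frontier_subset_closure hp⟩
  obtain ⟨ρ, hρ, hball⟩ := isOpen_iff.1 hΩo c hc
  have hρd : ρ ≤ ‖c - p‖ := by
    rw [hΩo.frontier_eq] at hp
    by_contra! h
    exact hp.2 (hball (by rwa [mem_ball, dist_eq_norm, norm_sub_rev]))
  obtain ⟨f, hf⟩ := exists_linearIsometryEquiv_apply_norm_smul_eq
    (by simp : ‖single (Fin.last m) (1 : ℝ)‖ = 1) (c - p)
  let A := f.toAffineIsometryEquiv.trans (AffineIsometryEquiv.vaddConst ℝ p)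
  have hA : ∀ z, A z = f z + p := fun _ => rfl
  obtain ⟨r, hr, L, h, hh, heq⟩ := exists_ball_inter_eq_ball_inter_epigraph (Ω := A ⁻¹' Ω)
    (hΩc.affine_preimage A.toAffineEquiv.toAffineMap) (hΩo.preimage A.continuous) hρ hρd
    (fun z hz => hball (by
      rwa [mem_ball, hA, dist_eq_norm, ← sub_sub_eq_add_sub, ← hf, ← map_sub, f.norm_map,
        ← dist_eq_norm]))
    (by rw [show ⇑A = A.toHomeomorph from rfl, ← Homeomorph.preimage_frontier]; simpa [hA] using hp)
  refine ⟨r, hr, A '' {x | h (init x) < x (Fin.last m)}, ⟨f, p, L, h, hh, rfl⟩, ?_⟩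
  apply A.surjective.preimage_injective
  have hA0 : A 0 = p := by simp [hA]
  rw [preimage_inter, preimage_inter, A.injective.preimage_image, ← hA0, A.isometry.preimage_ball]
  exact heq

theorem convex_isLipschitzDomain_general {m : ℕ}
    (Ω : Set (EuclideanSpace ℝ (Fin (m + 1)))) (hΩb : Bornology.IsBounded Ω)
    (hΩc : Convex ℝ Ω) (hΩo : IsOpen Ω) :
    ∃ (N : ℕ) (x : Fin N → EuclideanSpace ℝ (Fin (m + 1))) (r : Fin N → ℝ),
      (∀ i, x i ∈ frontier Ω) ∧ (∀ i, 0 < r i) ∧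
      frontier Ω ⊆ ⋃ i, ball (x i) (r i) ∧
      ∀ i, ∃ Ωi : Set (EuclideanSpace ℝ (Fin (m + 1))),
        IsRotatedSpecialLipschitzDomain Ωi ∧
        ball (x i) (r i) ∩ Ω = ball (x i) (r i) ∩ Ωi := by
  have hK : IsCompact (frontier Ω) :=
    hΩb.isCompact_closure.of_isClosed_subset isClosed_frontier frontier_subset_closure
  exact hK.exists_fin_cover_balls fun _ hp =>
    exists_ball_inter_eq_ball_inter_rotatedSpecialLipschitzDomain hΩc hΩo hp

/-- Every bounded convex open set is a bounded Lipschitz domain: its boundary is covered by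
finitely many balls, on each of which `Ω` coincides with a rotated special Lipschitz
domain. -/
theorem convex_isLipschitzDomain {m : ℕ} (hm : 0 < m)
    (Ω : Set (EuclideanSpace ℝ (Fin (m + 1)))) (hΩb : Bornology.IsBounded Ω)
    (hΩc : Convex ℝ Ω) (hΩo : IsOpen Ω) (hne : Ω.Nonempty) :
    ∃ (N : ℕ) (x : Fin N → EuclideanSpace ℝ (Fin (m + 1))) (r : Fin N → ℝ),
      (∀ i, x i ∈ frontier Ω) ∧ (∀ i, 0 < r i) ∧
      frontier Ω ⊆ ⋃ i, ball (x i) (r i) ∧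
      ∀ i, ∃ Ωi : Set (EuclideanSpace ℝ (Fin (m + 1))),
        IsRotatedSpecialLipschitzDomain Ωi ∧
        ball (x i) (r i) ∩ Ω = ball (x i) (r i) ∩ Ωi :=
  convex_isLipschitzDomain_general Ω hΩb hΩc hΩo
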